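/- arXiv:2105.13357 — 5 statements merged into one kernel-verified Lean document; each statement's English description precedes it below -/
import Mathlib

section
/- Let $G$ be a DAG for which the shortest trek map $\psi_G$ is well defined, and define the end point map $\eta_G$ by $\eta_G(\sigma_{ij}) = d_i d_j$ if there is a trek between $i$ and $j$ and $\eta_G(\sigma_{ij}) = 0$ otherwise. Then $\ker \psi_G \subseteq \ker \eta_G$. -/
open MvPolynomial

/-- A (simple) trek in a directed graph with adjacency `Adj`: a pair of directed
paths from a common source (top) vertex down to `i` and down to `j`, with no
repeated vertices overall (i.e. a simple colliderless path between `i` and `j`). -/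
structure Trek {V : Type*} (Adj : V → V → Prop) (i j : V) where
  left : List V
  right : List V
  left_ne : left ≠ []
  right_ne : right ≠ []
  same_top : left.head? = right.head?
  chain_left : left.Chain' Adj
  chain_right : right.Chain' Adj
  last_left : left.getLast? = some i
  last_right : right.getLast? = some j
  nodup : (left ++ right.tail).Nodup

namespace Trek

variable {V : Type*} {Adj : V → V → Prop} {i j : V}

/-- The topmost (source) vertex of a trek. -/
def top (t : Trek Adj i j) : V := t.left.head t.left_ne

/-- The list of directed edges used by a trek. -/
def edges (t : Trek Adj i j) : List (V × V) :=
  t.left.zip t.left.tail ++ t.right.zip t.right.tail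

end Trek

/-- A trek is shortest if no trek between the same endpoints has fewer edges. -/
def IsShortestTrek {V : Type*} {Adj : V → V → Prop} {i j : V} (t : Trek Adj i j) : Prop :=
  ∀ t' : Trek Adj i j, t.edges.length ≤ t'.edges.length

/-- Between any two vertices there is a unique shortest trek (whenever some trek
exists); this is the condition for the shortest trek map to be well defined. -/
def ShortestTreksUnique {V : Type*} (Adj : V → V → Prop) : Prop :=
  ∀ (i j : V) (t t' : Trek Adj i j), IsShortestTrek t → IsShortestTrek t' →
    t'.left = t.left ∧ t'.right = t.right

/-- A DAG on vertex set `Fin n`, with all edges pointing from a smaller vertex to a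
larger one (vertices are numerically ordered, which guarantees acyclicity). -/
structure DAG (n : ℕ) where
  E : Finset (Fin n × Fin n)
  increasing : ∀ e ∈ E, e.1 < e.2

def DAG.Adj {n : ℕ} (G : DAG n) (i j : Fin n) : Prop := (i, j) ∈ G.E

/-- Index type for the indeterminates `σ_{ij}`, `1 ≤ i ≤ j ≤ n`. -/
abbrev SymIdx (n : ℕ) := {p : Fin n × Fin n // p.1 ≤ p.2}

/-- The monomial `a_{top t} * ∏_{(k,l) ∈ t} λ_{kl}` associated to a trek `t`, in the
polynomial ring `ℂ[a_i, λ_{kl}]` (where `a_i = X (Sum.inl i)`, `λ_{kl} = X (Sum.inr (k,l))`). -/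
noncomputable def trekMonomial {n : ℕ} {Adj : Fin n → Fin n → Prop} {i j : Fin n}
    (t : Trek Adj i j) : MvPolynomial (Fin n ⊕ Fin n × Fin n) ℂ :=
  X (Sum.inl t.top) *
    (t.edges.map fun e => (X (Sum.inr e) : MvPolynomial (Fin n ⊕ Fin n × Fin n) ℂ)).prod

/-- `ψ` is the shortest trek map of `G`: it sends `σ_{ij}` to `0` when there is no trek
between `i` and `j`, and to the monomial of the (unique) shortest trek otherwise
(for `i = j` the unique trek is trivial and the monomial is `a_i`). -/
def IsShortestTrekMap {n : ℕ} (G : DAG n)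
    (ψ : MvPolynomial (SymIdx n) ℂ →ₐ[ℂ] MvPolynomial (Fin n ⊕ Fin n × Fin n) ℂ) : Prop :=
  ∀ p : SymIdx n,
    (IsEmpty (Trek G.Adj p.1.1 p.1.2) → ψ (X p) = 0) ∧
    (∀ t : Trek G.Adj p.1.1 p.1.2, IsShortestTrek t → ψ (X p) = trekMonomial t)

/-- `η` is the end point map of `G`: `η(σ_{ij}) = d_i d_j` if there is a trek between
`i` and `j`, and `0` otherwise. -/
def IsEndPointMap {n : ℕ} (G : DAG n)
    (η : MvPolynomial (SymIdx n) ℂ →ₐ[ℂ] MvPolynomial (Fin n) ℂ) : Prop :=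
  ∀ p : SymIdx n,
    (Nonempty (Trek G.Adj p.1.1 p.1.2) → η (X p) = X p.1.1 * X p.1.2) ∧
    (IsEmpty (Trek G.Adj p.1.1 p.1.2) → η (X p) = 0)

/-!
Send `a_k ↦ d_k²` and `λ_{kl} ↦ d_l / d_k` into the fraction field of `ℂ[d_1, …, d_n]`.
Along each directed leg of a trek the edge weights telescope, so the monomial of any trek
from its top `k` to `i` and `j` evaluates to `d_k² · (d_i / d_k) · (d_j / d_k) = d_i d_j`.
Hence this evaluation turns `ψ_G` into `η_G` followed by the (injective) inclusion into the
fraction field, and every polynomial killed by `ψ_G` is killed by `η_G`.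
-/

lemma List.prod_map_zip_tail_div {V K : Type*} [CommGroupWithZero K] (f : V → K)
    (hf : ∀ v, f v ≠ 0) : ∀ (L : List V) (hL : L ≠ []),
    ((L.zip L.tail).map fun e => f e.2 / f e.1).prod = f (L.getLast hL) / f (L.head hL)
  | [a], _ => by simp [div_self (hf a)]
  | a :: b :: L, _ => by
    have ih := List.prod_map_zip_tail_div f hf (b :: L) (List.cons_ne_nil _ _)
    rw [List.tail_cons] at ih
    rw [List.tail_cons, List.zip_cons_cons, List.map_cons, List.prod_cons, ih,
      List.getLast_cons (List.cons_ne_nil _ _), List.head_cons, List.head_cons, mul_comm,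
      div_mul_div_cancel₀ (hf b)]

namespace Trek

variable {V : Type*} {Adj : V → V → Prop} {i j : V}

lemma head_right (t : Trek Adj i j) : t.right.head t.right_ne = t.top := by
  have h := t.same_top
  rw [List.head?_eq_some_head t.left_ne, List.head?_eq_some_head t.right_ne] at h
  exact (Option.some_inj.mp h).symm

lemma getLast_left (t : Trek Adj i j) : t.left.getLast t.left_ne = i :=
  Option.some_inj.mp ((List.getLast?_eq_some_getLast t.left_ne).symm.trans t.last_left)

lemma getLast_right (t : Trek Adj i j) : t.right.getLast t.right_ne = j :=
  Option.some_inj.mp ((List.getLast?_eq_some_getLast t.right_ne).symm.trans t.last_right)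

end Trek

lemma exists_isShortestTrek {V : Type*} {Adj : V → V → Prop} {i j : V}
    (h : Nonempty (Trek Adj i j)) : ∃ t : Trek Adj i j, IsShortestTrek t := by
  classical
  have hex : ∃ m, ∃ t : Trek Adj i j, t.edges.length = m := ⟨_, h.some, rfl⟩
  obtain ⟨t, ht⟩ := Nat.find_spec hex
  exact ⟨t, fun t' => ht ▸ Nat.find_min' hex ⟨t', rfl⟩⟩

noncomputable def endPointWeight {n : ℕ} {K : Type*} [Field K] (d : Fin n → K) :
    Fin n ⊕ Fin n × Fin n → K :=
  Sum.elim (fun k => d k ^ 2) fun e => d e.2 / d e.1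

lemma aeval_endPointWeight_trekMonomial {n : ℕ} {K : Type*} [Field K] [Algebra ℂ K]
    (d : Fin n → K) (hd : ∀ k, d k ≠ 0) {Adj : Fin n → Fin n → Prop} {i j : Fin n}
    (t : Trek Adj i j) : aeval (endPointWeight d) (trekMonomial t) = d i * d j := by
  have hedges : ((t.edges.map fun e => (X (Sum.inr e) : MvPolynomial _ ℂ)).map
      (aeval (endPointWeight d))).prod = d i / d t.top * (d j / d t.top) := by
    rw [List.map_map, Trek.edges, List.map_append, List.prod_append]
    simp only [Function.comp_def, aeval_X, endPointWeight, Sum.elim_inr]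
    rw [List.prod_map_zip_tail_div d hd _ t.left_ne, List.prod_map_zip_tail_div d hd _ t.right_ne,
      t.getLast_left, t.getLast_right, t.head_right]
    rfl
  rw [trekMonomial, map_mul, map_list_prod, hedges, aeval_X, endPointWeight, Sum.elim_inl]
  field_simp [hd t.top]

variable {n : ℕ} {G : DAG n}

lemma algebraMap_comp_endPointMap_eq {ψ : MvPolynomial (SymIdx n) ℂ →ₐ[ℂ]
      MvPolynomial (Fin n ⊕ Fin n × Fin n) ℂ} (hψ : IsShortestTrekMap G ψ)
    {η : MvPolynomial (SymIdx n) ℂ →ₐ[ℂ] MvPolynomial (Fin n) ℂ} (hη : IsEndPointMap G η) :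
    (IsScalarTower.toAlgHom ℂ (MvPolynomial (Fin n) ℂ)
        (FractionRing (MvPolynomial (Fin n) ℂ))).comp η =
      (aeval (endPointWeight fun k =>
        algebraMap (MvPolynomial (Fin n) ℂ) (FractionRing (MvPolynomial (Fin n) ℂ)) (X k))).comp ψ := by
  refine algHom_ext fun p => ?_
  simp only [AlgHom.comp_apply, IsScalarTower.coe_toAlgHom']
  by_cases h : Nonempty (Trek G.Adj p.1.1 p.1.2)
  · obtain ⟨t, ht⟩ := exists_isShortestTrek h
    have hd : ∀ k : Fin n, algebraMap (MvPolynomial (Fin n) ℂ) (FractionRing (MvPolynomial (Fin n) ℂ)) (X k) ≠ 0 :=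
      fun k => IsFractionRing.to_map_ne_zero_of_mem_nonZeroDivisors
        (mem_nonZeroDivisors_of_ne_zero (X_ne_zero k))
    rw [(hη p).1 h, (hψ p).2 t ht, aeval_endPointWeight_trekMonomial _ hd, map_mul]
  · rw [not_nonempty_iff] at h
    rw [(hη p).2 h, (hψ p).1 h, map_zero, map_zero]

theorem stmt6_general (n : ℕ) (G : DAG n)
    (ψ : MvPolynomial (SymIdx n) ℂ →ₐ[ℂ] MvPolynomial (Fin n ⊕ Fin n × Fin n) ℂ)
    (hψ : IsShortestTrekMap G ψ)
    (η : MvPolynomial (SymIdx n) ℂ →ₐ[ℂ] MvPolynomial (Fin n) ℂ)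
    (hη : IsEndPointMap G η) :
    RingHom.ker ψ.toRingHom ≤ RingHom.ker η.toRingHom := by
  intro q hq
  have hψq : ψ q = 0 := hq
  have h := DFunLike.congr_fun (algebraMap_comp_endPointMap_eq hψ hη) q
  rw [AlgHom.comp_apply, AlgHom.comp_apply, hψq, map_zero, IsScalarTower.coe_toAlgHom'] at h
  exact IsFractionRing.to_map_eq_zero_iff.mp h

theorem stmt6 (n : ℕ) (G : DAG n) (hst : ShortestTreksUnique G.Adj)
    (ψ : MvPolynomial (SymIdx n) ℂ →ₐ[ℂ] MvPolynomial (Fin n ⊕ Fin n × Fin n) ℂ)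
    (hψ : IsShortestTrekMap G ψ)
    (η : MvPolynomial (SymIdx n) ℂ →ₐ[ℂ] MvPolynomial (Fin n) ℂ)
    (hη : IsEndPointMap G η) :
    RingHom.ker ψ.toRingHom ≤ RingHom.ker η.toRingHom :=
  stmt6_general n G ψ hψ η hη
end

section
/- Let $\psi_G$ be the shortest trek map of a DAG $G$ and suppose $\sigma^u - \sigma^v \in \ker \psi_G$ where every indeterminate appearing in $\sigma^u$ or $\sigma^v$ corresponds to a pair of vertices connected by a trek. Then for every vertex $i$, the number of occurrences of index $i$ among the indeterminates of $\sigma^u$ (counting $\sigma_{ii}$ twice) equals the corresponding count for $\sigma^v$. -/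
open MvPolynomial

/-- The number of occurrences of the index `i` among the indeterminates of the
monomial `σ^u` (counting `σ_{ii}` twice). -/
def idxCount {n : ℕ} (i : Fin n) (u : SymIdx n →₀ ℕ) : ℕ :=
  u.sum fun p m => m * ((if p.1.1 = i then 1 else 0) + (if p.1.2 = i then 1 else 0))

/-!
Grade `ℂ[a_c, λ_{kl}]` by a weight `f : Fin n → ℤ` on the vertices, giving `a_c` the weight `2 f c`
and `λ_{kl}` the weight `f l - f k`. Along each of the two sides of a trek the edge weights
telescope, so every trek monomial between `i` and `j` has weight `f i + f j`, independently of the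
trek. Hence `ψ(σ^u)` has weight `∑_p u_p (f p₁ + f p₂)`, and for `f` the indicator of a vertex `i`
this is the number of occurrences of `i` in `σ^u`. Since `ψ(σ^u) = ψ(σ^v)`, these counts agree.
-/

open MvPolynomial LaurentPolynomial

namespace LaurentPolynomial

variable {R : Type*}

theorem T_injective [Semiring R] [Nontrivial R] : Function.Injective (T : ℤ → R[T;T⁻¹]) :=
  AddMonoidAlgebra.single_left_injective one_ne_zero

theorem T_list_sum [Semiring R] (l : List ℤ) : (T l.sum : R[T;T⁻¹]) = (l.map T).prod := by
  induction l with
  | nil => exact T_zero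
  | cons a l ih => rw [List.sum_cons, T_add, ih, List.map_cons, List.prod_cons]

theorem T_sum [CommSemiring R] {ι : Type*} (s : Finset ι) (g : ι → ℤ) :
    (T (∑ x ∈ s, g x) : R[T;T⁻¹]) = ∏ x ∈ s, T (g x) := by
  classical
  induction s using Finset.induction with
  | empty => exact T_zero
  | insert a s ha ih => rw [Finset.sum_insert ha, Finset.prod_insert ha, T_add, ih]

end LaurentPolynomial

theorem List.sum_map_zip_tail_sub {α G : Type*} [AddCommGroup G] (f : α → G) :
    ∀ {l : List α} {a b : α}, l.head? = some a → l.getLast? = some b →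
      ((l.zip l.tail).map fun e => f e.2 - f e.1).sum = f b - f a
  | [_], _, _, ha, hb => by simp_all
  | a :: c :: l, _, _, ha, hb => by
    have ih := List.sum_map_zip_tail_sub f (l := c :: l) rfl (by simpa using hb)
    rw [List.tail_cons] at ih
    rw [Option.some_inj.mp ha.symm, List.tail_cons, List.zip_cons_cons, List.map_cons,
      List.sum_cons, ih]
    abel

namespace Trek

variable {V : Type*} {Adj : V → V → Prop} {i j : V}

theorem left_head? (t : Trek Adj i j) : t.left.head? = some t.top :=
  List.head?_eq_some_head t.left_ne

theorem right_head? (t : Trek Adj i j) : t.right.head? = some t.top :=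
  t.same_top ▸ t.left_head?

theorem sum_map_edges_sub {G : Type*} [AddCommGroup G] (t : Trek Adj i j) (f : V → G) :
    (t.edges.map fun e => f e.2 - f e.1).sum = (f i - f t.top) + (f j - f t.top) := by
  rw [edges, List.map_append, List.sum_append,
    List.sum_map_zip_tail_sub f t.left_head? t.last_left,
    List.sum_map_zip_tail_sub f t.right_head? t.last_right]

theorem exists_isShortestTrek (h : Nonempty (Trek Adj i j)) :
    ∃ t : Trek Adj i j, IsShortestTrek t :=
  ⟨_, fun t' => Function.argmin_le (fun t : Trek Adj i j => t.edges.length) t'⟩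

end Trek

noncomputable def trekWeight {n : ℕ} (f : Fin n → ℤ) :
    MvPolynomial (Fin n ⊕ Fin n × Fin n) ℂ →ₐ[ℂ] ℂ[T;T⁻¹] :=
  aeval (Sum.elim (fun c => T (2 * f c)) (fun e => T (f e.2 - f e.1)))

theorem trekWeight_trekMonomial {n : ℕ} (f : Fin n → ℤ) {Adj : Fin n → Fin n → Prop}
    {i j : Fin n} (t : Trek Adj i j) : trekWeight f (trekMonomial t) = T (f i + f j) := by
  have hedges : trekWeight f (t.edges.map fun e => X (Sum.inr e)).prod
      = T (t.edges.map fun e => f e.2 - f e.1).sum := by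
    simp [trekWeight, map_list_prod, T_list_sum, Function.comp_def]
  rw [trekMonomial, map_mul, hedges, t.sum_map_edges_sub, trekWeight, aeval_X, Sum.elim_inl,
    ← T_add]
  congr 1
  ring

theorem trekWeight_shortestTrekMap_monomial {n : ℕ} {G : DAG n}
    {ψ : MvPolynomial (SymIdx n) ℂ →ₐ[ℂ] MvPolynomial (Fin n ⊕ Fin n × Fin n) ℂ}
    (hψ : IsShortestTrekMap G ψ) (f : Fin n → ℤ) (w : SymIdx n →₀ ℕ)
    (hw : ∀ p ∈ w.support, Nonempty (Trek G.Adj p.1.1 p.1.2)) :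
    trekWeight f (ψ (monomial w 1)) = T (w.sum fun p m => m * (f p.1.1 + f p.1.2)) := by
  have hvar : ∀ p ∈ w.support,
      trekWeight f (ψ (X p ^ w p)) = T (w p * (f p.1.1 + f p.1.2)) := by
    intro p hp
    obtain ⟨t, ht⟩ := Trek.exists_isShortestTrek (hw p hp)
    rw [map_pow, map_pow, (hψ p).2 t ht, trekWeight_trekMonomial, T_pow]
  rw [monomial_eq, C_1, one_mul, map_finsuppProd, map_finsuppProd, Finsupp.sum, T_sum]
  exact Finset.prod_congr rfl hvar

theorem stmt7_general (n : ℕ) (G : DAG n)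
    (ψ : MvPolynomial (SymIdx n) ℂ →ₐ[ℂ] MvPolynomial (Fin n ⊕ Fin n × Fin n) ℂ)
    (hψ : IsShortestTrekMap G ψ)
    (u v : SymIdx n →₀ ℕ)
    (hker : monomial u (1 : ℂ) - monomial v 1 ∈ RingHom.ker ψ.toRingHom)
    (hu : ∀ p ∈ u.support, Nonempty (Trek G.Adj p.1.1 p.1.2))
    (hv : ∀ p ∈ v.support, Nonempty (Trek G.Adj p.1.1 p.1.2)) :
    ∀ i : Fin n, idxCount i u = idxCount i v := by
  intro i
  have hψuv : ψ (monomial u 1) = ψ (monomial v 1) :=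
    sub_eq_zero.mp (by simpa using RingHom.mem_ker.mp hker)
  let δ : Fin n → ℤ := fun x => if x = i then 1 else 0
  have hcount : ∀ w : SymIdx n →₀ ℕ,
      (idxCount i w : ℤ) = w.sum fun p m => m * (δ p.1.1 + δ p.1.2) := by
    intro w
    simp only [idxCount, Finsupp.sum, δ]
    push_cast
    rfl
  have hweight := congrArg (trekWeight δ) hψuv
  rw [trekWeight_shortestTrekMap_monomial hψ δ u hu,
    trekWeight_shortestTrekMap_monomial hψ δ v hv, ← hcount, ← hcount] at hweight
  exact_mod_cast T_injective hweight

theorem stmt7 (n : ℕ) (G : DAG n) (hst : ShortestTreksUnique G.Adj)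
    (ψ : MvPolynomial (SymIdx n) ℂ →ₐ[ℂ] MvPolynomial (Fin n ⊕ Fin n × Fin n) ℂ)
    (hψ : IsShortestTrekMap G ψ)
    (u v : SymIdx n →₀ ℕ)
    (hker : monomial u (1 : ℂ) - monomial v 1 ∈ RingHom.ker ψ.toRingHom)
    (hu : ∀ p ∈ u.support, Nonempty (Trek G.Adj p.1.1 p.1.2))
    (hv : ∀ p ∈ v.support, Nonempty (Trek G.Adj p.1.1 p.1.2)) :
    ∀ i : Fin n, idxCount i u = idxCount i v :=
  stmt7_general n G ψ hψ u v hker hu hv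
end

section
/- Let $G$ be the DAG on vertices $\{1,2,3,4\}$ with edges $1\to 2$, $2\to 3$, $2\to 4$, $3\to 4$. Then the kernel of the shortest trek map $\psi_G$ (with $\psi_G(\sigma_{11})=a_1$, $\psi_G(\sigma_{12})=a_1\lambda_{12}$, $\psi_G(\sigma_{13})=a_1\lambda_{12}\lambda_{23}$, $\psi_G(\sigma_{14})=a_1\lambda_{12}\lambda_{24}$, $\psi_G(\sigma_{22})=a_2$, $\psi_G(\sigma_{23})=a_2\lambda_{23}$, $\psi_G(\sigma_{24})=a_2\lambda_{24}$, $\psi_G(\sigma_{33})=a_3$, $\psi_G(\sigma_{34})=a_2\lambda_{34}$, $\psi_G(\sigma_{44})=a_4$) equals the ideal $\langle \sigma_{12}\sigma_{23}-\sigma_{13}\sigma_{22},\ \sigma_{12}\sigma_{24}-\sigma_{14}\sigma_{22},\ \sigma_{13}\sigma_{24}-\sigma_{14}\sigma_{23} \rangle$ in $\mathbb{C}[\sigma_{ij} : 1\le i \le j \le 4]$. -/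
/-!
`ψ` is the monomial map `σ_s ↦ x ^ E s`: it sends the monomial `σ ^ d` to `x ^ T d`, where
`T d = ∑ d_s • E s` is additive in `d`. The three binomials are visibly in the kernel. Weighting
`σ₀₂, σ₀₃, σ₁₁, σ₁₂` by `1, 3, 3, 1` (all other variables by `0`) makes `σ₀₂σ₁₁, σ₀₃σ₁₁, σ₀₃σ₁₂`
the strictly heavier terms of the binomials, so rewriting them by the lighter terms reduces every
polynomial, modulo the ideal, to a combination of standard monomials: those divisible by none of
the three. On standard exponents `T` is injective: the eight coordinates of `T d` together with the
standardness conditions determine `d`. So `ψ` kills no nonzero combination of standard monomials,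
and its kernel is the ideal.
-/

open MvPolynomial

/-- Index type for the indeterminates `σ_{ij}`, `1 ≤ i ≤ j ≤ 4` (vertices `1,2,3,4`
are represented by `0,1,2,3 : Fin 4`). -/
abbrev SymIdx4 := {p : Fin 4 × Fin 4 // p.1 ≤ p.2}

/-- The parameter `a_i`. -/
noncomputable def av (i : Fin 4) : MvPolynomial (Fin 4 ⊕ Fin 4 × Fin 4) ℂ := X (Sum.inl i)

/-- The parameter `λ_{ij}`. -/
noncomputable def la (i j : Fin 4) : MvPolynomial (Fin 4 ⊕ Fin 4 × Fin 4) ℂ :=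
  X (Sum.inr (i, j))

/-- The shortest trek map of the DAG on `{1,2,3,4}` with edges
`1→2, 2→3, 2→4, 3→4` (here relabelled `0,1,2,3`), given by its explicit values. -/
noncomputable def psiEx : MvPolynomial SymIdx4 ℂ →ₐ[ℂ] MvPolynomial (Fin 4 ⊕ Fin 4 × Fin 4) ℂ :=
  aeval fun p =>
    if p.1 = ((0 : Fin 4), (0 : Fin 4)) then av 0
    else if p.1 = (0, 1) then av 0 * la 0 1
    else if p.1 = (0, 2) then av 0 * la 0 1 * la 1 2
    else if p.1 = (0, 3) then av 0 * la 0 1 * la 1 3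
    else if p.1 = (1, 1) then av 1
    else if p.1 = (1, 2) then av 1 * la 1 2
    else if p.1 = (1, 3) then av 1 * la 1 3
    else if p.1 = (2, 2) then av 2
    else if p.1 = (2, 3) then av 1 * la 2 3
    else av 3

/-- The indeterminate `σ_{ij}`. -/
noncomputable def sg (i j : Fin 4) (h : i ≤ j) : MvPolynomial SymIdx4 ℂ := X ⟨(i, j), h⟩

namespace Finsupp

theorem single_add_single_le {σ : Type*} {i j : σ} (hij : i ≠ j) {d : σ →₀ ℕ} (hi : d i ≠ 0)
    (hj : d j ≠ 0) : single i 1 + single j 1 ≤ d := by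
  classical
  refine le_def.2 fun k => ?_
  simp only [add_apply, single_apply]
  split_ifs <;> grind

end Finsupp

namespace MvPolynomial

open Finsupp

variable {σ τ R : Type*}

section CommSemiring

variable [CommSemiring R]

theorem monomial_single_add_single (i j : σ) :
    monomial (single i 1 + single j 1) (1 : R) = X i * X j := by
  simp [X, monomial_mul]

noncomputable def monomialMap (E : σ → τ →₀ ℕ) : MvPolynomial σ R →ₐ[R] MvPolynomial τ R :=
  AddMonoidAlgebra.mapDomainAlgHom R R (weight E)

theorem monomialMap_monomial (E : σ → τ →₀ ℕ) (d : σ →₀ ℕ) (r : R) :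
    monomialMap E (monomial d r) = monomial (weight E d) r :=
  AddMonoidAlgebra.mapDomain_single

theorem monomialMap_X (E : σ → τ →₀ ℕ) (s : σ) :
    monomialMap (R := R) E (X s) = monomial (E s) 1 := by
  simp [X, monomialMap_monomial, weight_single]

theorem coeff_weight_monomialMap {E : σ → τ →₀ ℕ} {s : Set (σ →₀ ℕ)}
    (hs : Set.InjOn (weight E) s) {p : MvPolynomial σ R} (hp : p ∈ restrictSupport R s)
    {d : σ →₀ ℕ} (hd : d ∈ s) : coeff (weight E d) (monomialMap E p) = coeff d p := by
  classical
  conv_lhs => rw [p.as_sum, map_sum]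
  simp only [monomialMap_monomial, coeff_sum, coeff_monomial]
  refine (Finset.sum_eq_single d (fun d' hd' hne => if_neg fun h => hne ?_) ?_).trans (if_pos rfl)
  · exact hs (hp hd') hd h
  · simp +contextual

theorem eq_zero_of_monomialMap_eq_zero {E : σ → τ →₀ ℕ} {s : Set (σ →₀ ℕ)}
    (hs : Set.InjOn (weight E) s) {p : MvPolynomial σ R} (hp : p ∈ restrictSupport R s)
    (h : monomialMap E p = 0) : p = 0 := by
  ext d
  by_cases hd : d ∈ p.support
  · rw [← coeff_weight_monomialMap hs hp (hp hd), h, coeff_zero, coeff_zero]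
  · simpa using hd

end CommSemiring

section CommRing

variable [CommRing R]

theorem monomial_mem_sup_restrictSupport {I : Ideal (MvPolynomial σ R)} {s : Set (σ →₀ ℕ)}
    (w : σ → ℕ) (hred : ∀ d ∉ s, ∃ a b, a ≤ d ∧ weight w b < weight w a ∧
      monomial a (1 : R) - monomial b 1 ∈ I) (d : σ →₀ ℕ) (r : R) :
    monomial d r ∈ I.restrictScalars R ⊔ restrictSupport R s := by
  induction hn : weight w d using Nat.strong_induction_on generalizing d with
  | _ n ih =>
  by_cases hd : d ∈ s
  · exact Submodule.mem_sup_right (by simp [hd])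
  obtain ⟨a, b, hab, hw, hI⟩ := hred d hd
  have hsplit : monomial d r =
      monomial (d - a + b) r + monomial (d - a) r * (monomial a 1 - monomial b 1) := by
    rw [mul_sub, monomial_mul, monomial_mul, tsub_add_cancel_of_le hab, mul_one]
    abel
  have hlt : weight w (d - a + b) < n := by
    have hd := congrArg (weight w) (tsub_add_cancel_of_le hab)
    simp only [map_add] at hd ⊢
    omega
  rw [hsplit]
  exact add_mem (ih _ hlt _ rfl) (Submodule.mem_sup_left (I.mul_mem_left _ hI))

theorem mem_sup_restrictSupport {I : Ideal (MvPolynomial σ R)} {s : Set (σ →₀ ℕ)}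
    (w : σ → ℕ) (hred : ∀ d ∉ s, ∃ a b, a ≤ d ∧ weight w b < weight w a ∧
      monomial a (1 : R) - monomial b 1 ∈ I) (p : MvPolynomial σ R) :
    p ∈ I.restrictScalars R ⊔ restrictSupport R s := by
  induction p using MvPolynomial.induction_on' with
  | monomial d r => exact monomial_mem_sup_restrictSupport w hred d r
  | add p q hp hq => exact add_mem hp hq

theorem ker_monomialMap_eq {E : σ → τ →₀ ℕ} {I : Ideal (MvPolynomial σ R)} {s : Set (σ →₀ ℕ)}
    (hI : I ≤ RingHom.ker (monomialMap (R := R) E)) (hs : Set.InjOn (weight E) s)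
    (hsup : ∀ p, p ∈ I.restrictScalars R ⊔ restrictSupport R s) :
    RingHom.ker (monomialMap (R := R) E) = I := by
  refine le_antisymm (fun p hp => ?_) hI
  obtain ⟨q, hq, r, hr, rfl⟩ := Submodule.mem_sup.mp (hsup p)
  have hqr : monomialMap E r = 0 := by
    have hq0 : monomialMap E q = 0 := hI hq
    simpa [RingHom.mem_ker, hq0] using hp
  rw [eq_zero_of_monomialMap_eq_zero hs hr hqr, add_zero]
  exact hq

end CommRing

end MvPolynomial

namespace ShortestTrek

open Finsupp

abbrev idx (i j : Fin 4) (h : i ≤ j := by decide) : SymIdx4 := ⟨(i, j), h⟩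

noncomputable def trekExp (p : SymIdx4) : (Fin 4 ⊕ Fin 4 × Fin 4) →₀ ℕ :=
  let a i := single (Sum.inl i) 1
  let l i j := single (Sum.inr (i, j)) 1
  if p.1 = ((0 : Fin 4), (0 : Fin 4)) then a 0
  else if p.1 = (0, 1) then a 0 + l 0 1
  else if p.1 = (0, 2) then a 0 + l 0 1 + l 1 2
  else if p.1 = (0, 3) then a 0 + l 0 1 + l 1 3
  else if p.1 = (1, 1) then a 1
  else if p.1 = (1, 2) then a 1 + l 1 2
  else if p.1 = (1, 3) then a 1 + l 1 3
  else if p.1 = (2, 2) then a 2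
  else if p.1 = (2, 3) then a 1 + l 2 3
  else a 3

theorem symIdx4_cases (s : SymIdx4) : s = idx 0 0 ∨ s = idx 0 1 ∨ s = idx 0 2 ∨ s = idx 0 3 ∨
    s = idx 1 1 ∨ s = idx 1 2 ∨ s = idx 1 3 ∨ s = idx 2 2 ∨ s = idx 2 3 ∨ s = idx 3 3 := by
  revert s; decide

theorem psiEx_eq_monomialMap : psiEx = monomialMap trekExp := by
  ext p
  rw [psiEx, aeval_X, monomialMap_X]
  rcases symIdx4_cases p with rfl | rfl | rfl | rfl | rfl | rfl | rfl | rfl | rfl | rfl <;>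
    simp only [trekExp, Prod.mk.injEq, Fin.reduceEq, and_false, false_and, and_self, if_true,
      if_false, av, la, X, monomial_mul, mul_one]

theorem weight_trekExp_apply (d : SymIdx4 →₀ ℕ) (x : Fin 4 ⊕ Fin 4 × Fin 4) :
    weight trekExp d x = ∑ s, d s * trekExp s x := by
  simp [weight_eq_sum]

theorem sum_symIdx4 {M : Type*} [AddCommMonoid M] (g : SymIdx4 → M) :
    ∑ s, g s = g (idx 0 0) + g (idx 0 1) + g (idx 0 2) + g (idx 0 3) + g (idx 1 1) +
      g (idx 1 2) + g (idx 1 3) + g (idx 2 2) + g (idx 2 3) + g (idx 3 3) := by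
  rw [show (Finset.univ : Finset SymIdx4) = {idx 0 0, idx 0 1, idx 0 2, idx 0 3, idx 1 1,
    idx 1 2, idx 1 3, idx 2 2, idx 2 3, idx 3 3} by decide]
  simp [add_assoc]

def standard : Set (SymIdx4 →₀ ℕ) :=
  {d | (d (idx 0 2) = 0 ∨ d (idx 1 1) = 0) ∧ (d (idx 0 3) = 0 ∨ d (idx 1 1) = 0) ∧
    (d (idx 0 3) = 0 ∨ d (idx 1 2) = 0)}

theorem injOn_weight_trekExp : Set.InjOn (weight trekExp) standard := by
  intro d hd d' hd' h
  have hx : ∀ x, ∑ s, d s * trekExp s x = ∑ s, d' s * trekExp s x := fun x => by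
    simpa [weight_trekExp_apply] using DFunLike.congr_fun h x
  have h1 := hx (.inl 0)
  have h2 := hx (.inl 1)
  have h3 := hx (.inl 2)
  have h4 := hx (.inl 3)
  have h5 := hx (.inr (0, 1))
  have h6 := hx (.inr (1, 2))
  have h7 := hx (.inr (1, 3))
  have h8 := hx (.inr (2, 3))
  simp only [sum_symIdx4, trekExp, Prod.mk.injEq, Fin.reduceEq, and_false, false_and, and_self,
    if_true, if_false, Finsupp.add_apply, single_apply, Sum.inl.injEq, Sum.inr.injEq, reduceCtorEq,
    mul_one, mul_zero, add_zero, zero_add] at h1 h2 h3 h4 h5 h6 h7 h8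
  obtain ⟨h02, h03, h12⟩ := hd
  obtain ⟨h02', h03', h12'⟩ := hd'
  ext s
  rcases symIdx4_cases s with rfl | rfl | rfl | rfl | rfl | rfl | rfl | rfl | rfl | rfl <;> omega

def reductionWeight (s : SymIdx4) : ℕ :=
  if s = idx 0 3 ∨ s = idx 1 1 then 3 else if s = idx 0 2 ∨ s = idx 1 2 then 1 else 0

noncomputable def trekIdeal : Ideal (MvPolynomial SymIdx4 ℂ) :=
  Ideal.span {X (idx 0 1) * X (idx 1 2) - X (idx 0 2) * X (idx 1 1),
    X (idx 0 1) * X (idx 1 3) - X (idx 0 3) * X (idx 1 1),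
    X (idx 0 2) * X (idx 1 3) - X (idx 0 3) * X (idx 1 2)}

theorem trekIdeal_le_ker : trekIdeal ≤ RingHom.ker psiEx.toRingHom := by
  simp only [trekIdeal, Ideal.span_le, Set.insert_subset_iff, Set.singleton_subset_iff]
  refine ⟨?_, ?_, ?_⟩ <;>
    simp only [psiEx, av, la, aeval_X, SetLike.mem_coe, RingHom.mem_ker, AlgHom.toRingHom_eq_coe,
      RingHom.coe_coe, map_sub, map_mul, Prod.mk.injEq, Fin.reduceEq, one_ne_zero, and_false,
      false_and, and_self, if_true, if_false] <;>
    ring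

theorem exists_binomial_of_notMem_standard {d : SymIdx4 →₀ ℕ} (hd : d ∉ standard) :
    ∃ a b, a ≤ d ∧ weight reductionWeight b < weight reductionWeight a ∧
      monomial a 1 - monomial b 1 ∈ trekIdeal := by
  simp only [standard, Set.mem_ofPred_eq, not_and_or, not_or] at hd
  rcases hd with ⟨hp, hq⟩ | ⟨hp, hq⟩ | ⟨hp, hq⟩ <;>
  [refine ⟨_, single (idx 0 1) 1 + single (idx 1 2) 1, single_add_single_le (by decide) hp hq, ?_⟩;
   refine ⟨_, single (idx 0 1) 1 + single (idx 1 3) 1, single_add_single_le (by decide) hp hq, ?_⟩;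
   refine ⟨_, single (idx 0 2) 1 + single (idx 1 3) 1, single_add_single_le (by decide) hp hq, ?_⟩] <;>
  rw [monomial_single_add_single, monomial_single_add_single, ← neg_sub] <;>
  exact ⟨by simp [weight_single, reductionWeight], neg_mem (Ideal.subset_span (by simp))⟩

end ShortestTrek

theorem stmt15 :
    RingHom.ker psiEx.toRingHom = Ideal.span
      { sg 0 1 (by decide) * sg 1 2 (by decide) - sg 0 2 (by decide) * sg 1 1 (by decide),
        sg 0 1 (by decide) * sg 1 3 (by decide) - sg 0 3 (by decide) * sg 1 1 (by decide),
        sg 0 2 (by decide) * sg 1 3 (by decide) - sg 0 3 (by decide) * sg 1 2 (by decide) } := by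
  have hle := ShortestTrek.trekIdeal_le_ker
  rw [ShortestTrek.psiEx_eq_monomialMap] at hle ⊢
  exact ker_monomialMap_eq hle ShortestTrek.injOn_weight_trekExp
    (mem_sup_restrictSupport ShortestTrek.reductionWeight
      fun _ hd => ShortestTrek.exists_binomial_of_notMem_standard hd)
end

section
/- Let $G$ be a DAG such that there is at most one simple trek between any two distinct vertices. Then the simple trek rule $\phi_G$, defined by $\phi_G(\sigma_{ij}) = \sum_{P \in T(i,j)} a_{\mathrm{top}(P)} \prod_{(k,l) \in P} \lambda_{kl}$, sends every indeterminate $\sigma_{ij}$ to a monomial or to zero; consequently the kernel of $\phi_G$ is a toric ideal (generated by monomials and binomials). -/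
/-!
Every `σ_ij` is sent to `0` or to the monic monomial `a_top ∏ λ_kl` of a trek. For any algebra map
`φ` sending variables to monic monomials or to zero, the kernel is spanned by the monomials and
binomials `x^u - x^v` it contains: if `φ f = 0` and `x^u` occurs in `f`, then either `φ (x^u) = 0`,
or the coefficients in `f` of the monomials with the same image as `x^u` cancel, so some other
`x^v` of `f` has that image. Subtracting `coeff u f` times `x^u`, resp. `x^u - x^v`, shrinks the
support of `f`, which gives an induction.
-/

open MvPolynomial

namespace MvPolynomial

variable {σ τ R : Type*} [CommRing R]

variable (τ R) in
def monomialsOrZero : Submonoid (MvPolynomial τ R) where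
  carrier := {p | p = 0 ∨ ∃ d, p = monomial d 1}
  one_mem' := Or.inr ⟨0, rfl⟩
  mul_mem' := by
    rintro _ _ (rfl | ⟨d, rfl⟩) (rfl | ⟨e, rfl⟩)
    · exact Or.inl (zero_mul _)
    · exact Or.inl (zero_mul _)
    · exact Or.inl (mul_zero _)
    · exact Or.inr ⟨d + e, by rw [monomial_mul, one_mul]⟩

theorem X_mem_monomialsOrZero (i : τ) : (X i : MvPolynomial τ R) ∈ monomialsOrZero τ R :=
  Or.inr ⟨_, rfl⟩

open scoped Classical in
theorem coeff_of_mem_monomialsOrZero [Nontrivial R] {p : MvPolynomial τ R}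
    (hp : p ∈ monomialsOrZero τ R) (d : τ →₀ ℕ) :
    coeff d p = if p = monomial d 1 then 1 else 0 := by
  rcases hp with rfl | ⟨e, rfl⟩
  · rw [if_neg fun h => one_ne_zero (monomial_eq_zero.mp h.symm), coeff_zero]
  · simp only [coeff_monomial, monomial_left_inj (one_ne_zero (α := R))]

theorem card_support_sub_smul_lt {f g : MvPolynomial σ R} {u : σ →₀ ℕ} (hu : u ∈ f.support)
    (hgu : coeff u g = 1) (hg : g.support ⊆ f.support) :
    (f - coeff u f • g).support.card < f.support.card := by
  classical
  have hsub : (f - coeff u f • g).support ⊆ f.support.erase u := by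
    intro w hw
    refine Finset.mem_erase.mpr ⟨?_, ?_⟩
    · rintro rfl
      rw [mem_support_iff, coeff_sub, coeff_smul, hgu, smul_eq_mul, mul_one, sub_self] at hw
      exact hw rfl
    · rcases Finset.mem_union.mp (support_sub σ _ _ hw) with hf | hg'
      · exact hf
      · exact hg (support_smul hg')
  calc (f - coeff u f • g).support.card ≤ (f.support.erase u).card := Finset.card_le_card hsub
    _ < f.support.card := Finset.card_erase_lt_of_mem hu

section MonomialMap

variable {φ : MvPolynomial σ R →ₐ[R] MvPolynomial τ R}

theorem map_monomial_mem_monomialsOrZero (hφ : ∀ i, φ (X i) ∈ monomialsOrZero τ R)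
    (u : σ →₀ ℕ) : φ (monomial u 1) ∈ monomialsOrZero τ R := by
  rw [← prod_X_pow_eq_monomial, map_prod]
  exact Submonoid.prod_mem _ fun i _ => by rw [map_pow]; exact pow_mem (hφ i) _

open scoped Classical in
theorem coeff_map_eq_sum_of_map_X_mem [Nontrivial R] (hφ : ∀ i, φ (X i) ∈ monomialsOrZero τ R)
    (f : MvPolynomial σ R) (d : τ →₀ ℕ) :
    coeff d (φ f) = ∑ v ∈ f.support with φ (monomial v 1) = monomial d 1, coeff v f := by
  conv_lhs => rw [f.as_sum]
  simp only [map_sum, coeff_sum, Finset.sum_filter]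
  refine Finset.sum_congr rfl fun v _ => ?_
  rw [← mul_one (coeff v f), ← smul_eq_mul, ← smul_monomial, map_smul, coeff_smul,
    coeff_of_mem_monomialsOrZero (map_monomial_mem_monomialsOrZero hφ v), smul_ite, smul_zero,
    smul_eq_mul, mul_one]

theorem exists_ne_map_monomial_eq [Nontrivial R] (hφ : ∀ i, φ (X i) ∈ monomialsOrZero τ R)
    {f : MvPolynomial σ R} (hf : φ f = 0) {u : σ →₀ ℕ} (hu : u ∈ f.support) {d : τ →₀ ℕ}
    (hd : φ (monomial u 1) = monomial d 1) :
    ∃ v ∈ f.support, v ≠ u ∧ φ (monomial v 1) = monomial d 1 := by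
  classical
  by_contra! hcon
  have hsum := coeff_map_eq_sum_of_map_X_mem hφ f d
  rw [hf, coeff_zero, Finset.sum_eq_single_of_mem u (Finset.mem_filter.mpr ⟨hu, hd⟩)
    fun v hv hvu => absurd (Finset.mem_filter.mp hv).2 (hcon v (Finset.mem_filter.mp hv).1 hvu)]
    at hsum
  exact mem_support_iff.mp hu hsum.symm

def toricGenerators (φ : MvPolynomial σ R →ₐ[R] MvPolynomial τ R) : Set (MvPolynomial σ R) :=
  {g | φ g = 0 ∧ ((∃ u, g = monomial u 1) ∨ ∃ u v, g = monomial u 1 - monomial v 1)}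

theorem exists_mem_toricGenerators_coeff_eq_one [Nontrivial R]
    (hφ : ∀ i, φ (X i) ∈ monomialsOrZero τ R) {f : MvPolynomial σ R} (hf : φ f = 0)
    {u : σ →₀ ℕ} (hu : u ∈ f.support) :
    ∃ g ∈ toricGenerators φ, coeff u g = 1 ∧ g.support ⊆ f.support := by
  classical
  rcases map_monomial_mem_monomialsOrZero hφ u with h0 | ⟨d, hd⟩
  · refine ⟨monomial u 1, ⟨h0, Or.inl ⟨u, rfl⟩⟩, by rw [coeff_monomial, if_pos rfl], ?_⟩
    exact support_monomial_subset.trans (Finset.singleton_subset_iff.mpr hu)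
  · obtain ⟨v, hv, hvu, hvd⟩ := exists_ne_map_monomial_eq hφ hf hu hd
    refine ⟨monomial u 1 - monomial v 1,
      ⟨by rw [map_sub, hd, hvd, sub_self], Or.inr ⟨u, v, rfl⟩⟩, ?_, ?_⟩
    · rw [coeff_sub, coeff_monomial, coeff_monomial, if_pos rfl, if_neg hvu, sub_zero]
    · refine (support_sub σ _ _).trans (Finset.union_subset ?_ ?_)
      · exact support_monomial_subset.trans (Finset.singleton_subset_iff.mpr hu)
      · exact support_monomial_subset.trans (Finset.singleton_subset_iff.mpr hv)

theorem ker_eq_span_toricGenerators [Nontrivial R] (hφ : ∀ i, φ (X i) ∈ monomialsOrZero τ R) :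
    RingHom.ker φ.toRingHom = Ideal.span (toricGenerators φ) := by
  refine le_antisymm (fun f hf => ?_) (Ideal.span_le.mpr fun g hg => hg.1)
  induction hn : f.support.card using Nat.strong_induction_on generalizing f with
  | _ n ih =>
  replace hf : φ f = 0 := hf
  obtain rfl | ⟨u, hu⟩ := f.support.eq_empty_or_nonempty.imp_left support_eq_empty.mp
  · exact zero_mem _
  obtain ⟨g, hg, hgu, hgf⟩ := exists_mem_toricGenerators_coeff_eq_one hφ hf hu
  have hrest : f - coeff u f • g ∈ RingHom.ker φ.toRingHom := by
    change φ (f - coeff u f • g) = 0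
    rw [map_sub, map_smul, hf, hg.1, smul_zero, sub_zero]
  rw [← sub_add_cancel f (coeff u f • g)]
  exact add_mem (ih _ (hn ▸ card_support_sub_smul_lt hu hgu hgf) _ hrest rfl)
    (Submodule.smul_of_tower_mem _ _ (Ideal.subset_span hg))

end MonomialMap

end MvPolynomial

theorem trekMonomial_mem_monomialsOrZero {n : ℕ} {Adj : Fin n → Fin n → Prop} {i j : Fin n}
    (t : Trek Adj i j) : trekMonomial t ∈ monomialsOrZero (Fin n ⊕ Fin n × Fin n) ℂ := by
  refine mul_mem (X_mem_monomialsOrZero _) (Submonoid.list_prod_mem _ fun p hp => ?_)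
  obtain ⟨e, -, rfl⟩ := List.mem_map.mp hp
  exact X_mem_monomialsOrZero _

theorem stmt16_general (n : ℕ) (G : DAG n)
    (φ : MvPolynomial (SymIdx n) ℂ →ₐ[ℂ] MvPolynomial (Fin n ⊕ Fin n × Fin n) ℂ)
    (hφ0 : ∀ p : SymIdx n, IsEmpty (Trek G.Adj p.1.1 p.1.2) → φ (X p) = 0)
    (hφ1 : ∀ p : SymIdx n, ∀ t : Trek G.Adj p.1.1 p.1.2, φ (X p) = trekMonomial t) :
    (∀ p : SymIdx n, φ (X p) = 0 ∨
      ∃ d : (Fin n ⊕ Fin n × Fin n) →₀ ℕ, φ (X p) = monomial d 1) ∧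
    ∃ B : Set (MvPolynomial (SymIdx n) ℂ),
      RingHom.ker φ.toRingHom = Ideal.span B ∧
      ∀ f ∈ B, (∃ u : SymIdx n →₀ ℕ, f = monomial u 1) ∨
        ∃ u v : SymIdx n →₀ ℕ, f = monomial u 1 - monomial v 1 := by
  have hX : ∀ p, φ (X p) ∈ monomialsOrZero _ ℂ := fun p =>
    (isEmpty_or_nonempty (Trek G.Adj p.1.1 p.1.2)).elim (fun h => Or.inl (hφ0 p h))
      fun ⟨t⟩ => hφ1 p t ▸ trekMonomial_mem_monomialsOrZero t
  exact ⟨hX, toricGenerators φ, ker_eq_span_toricGenerators hX, fun _ hg => hg.2⟩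

theorem stmt16 (n : ℕ) (G : DAG n)
    (huniq : ∀ i j : Fin n, i ≠ j → Subsingleton (Trek G.Adj i j))
    (φ : MvPolynomial (SymIdx n) ℂ →ₐ[ℂ] MvPolynomial (Fin n ⊕ Fin n × Fin n) ℂ)
    (hφ0 : ∀ p : SymIdx n, IsEmpty (Trek G.Adj p.1.1 p.1.2) → φ (X p) = 0)
    (hφ1 : ∀ p : SymIdx n, ∀ t : Trek G.Adj p.1.1 p.1.2, φ (X p) = trekMonomial t) :
    (∀ p : SymIdx n, φ (X p) = 0 ∨
      ∃ d : (Fin n ⊕ Fin n × Fin n) →₀ ℕ, φ (X p) = monomial d 1) ∧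
    ∃ B : Set (MvPolynomial (SymIdx n) ℂ),
      RingHom.ker φ.toRingHom = Ideal.span B ∧
      ∀ f ∈ B, (∃ u : SymIdx n →₀ ℕ, f = monomial u 1) ∨
        ∃ u v : SymIdx n →₀ ℕ, f = monomial u 1 - monomial v 1 :=
  stmt16_general n G φ hφ0 hφ1
end

section
/- Let $M$ be an integer matrix with nonnegative nonzero columns defining a monomial map, and let $\mathcal{F} \subseteq \ker_{\mathbb{Z}}(M)$ be a finite set. Then the binomials $\{x^{v^+} - x^{v^-} : v \in \mathcal{F}\}$ generate the toric ideal $I_M$ if and only if for every $b$ with $M^{-1}(b) = \{u \in \mathbb{N}^N : Mu = b\}$ nonempty, the fiber graph on $M^{-1}(b)$ with edges $\{u, u'\}$ whenever $u - u' \in \pm\mathcal{F}$ is connected. -/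
open MvPolynomial

/-- The monomial map of a nonnegative integer matrix `M`: `x_j ↦ t^{M_{·j}}`. -/
noncomputable def phiM (m N : ℕ) (M : Matrix (Fin m) (Fin N) ℕ) :
    MvPolynomial (Fin N) ℂ →ₐ[ℂ] MvPolynomial (Fin m) ℂ :=
  aeval fun j => monomial (Finsupp.equivFunOnFinite.symm fun i => M i j) 1

/-- The binomial `x^{v⁺} - x^{v⁻}` associated to an integer vector `v`. -/
noncomputable def binom (N : ℕ) (v : Fin N → ℤ) : MvPolynomial (Fin N) ℂ :=
  monomial (Finsupp.equivFunOnFinite.symm fun j => (v j).toNat) 1 -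
    monomial (Finsupp.equivFunOnFinite.symm fun j => (-v j).toNat) 1

/-!
Both sides are statements about the grading of `ℂ[x]` by a map `q` on exponents. For any `q`,
an ideal generated by binomials `x^A - x^B` with `q (e + A) = q (e + B)` for all `e` lies in the
kernel of the pushforward of coefficients along `q`; and that kernel is contained in any ideal
containing every `x^d - x^{d'}` with `q d = q d'`.

For `q d = M d` the pushforward is the monomial map, so `I_M` is that kernel and contains the
binomials of `F`. If the fiber graphs are connected, each `x^u - x^{u'}` with `M u = M u'`
telescopes along a path into the span of these binomials, which is therefore `I_M`. Conversely,
the binomials of `F` are homogeneous for `q d =` the component of `d` in the fiber graph, so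
`x^u - x^{u'} ∈ I_M` forces `u` and `u'` into the same component.
-/

open AddMonoidAlgebra Matrix

section FiberBinomials

variable {σ Q R : Type*} [CommRing R] (q : (σ →₀ ℕ) → Q)

theorem mapDomainLinearMap_mul_monomial_sub_monomial {A B : σ →₀ ℕ}
    (hq : ∀ e, q (e + A) = q (e + B)) (r : MvPolynomial σ R) :
    mapDomainLinearMap R R q (r * (monomial A 1 - monomial B 1)) = 0 := by
  induction r using MvPolynomial.induction_on' with
  | monomial e c =>
    rw [mul_sub, monomial_mul, monomial_mul, mul_one, map_sub, ← single_eq_monomial,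
      ← single_eq_monomial, mapDomainLinearMap_single, mapDomainLinearMap_single, hq, sub_self]
  | add p p' hp hp' => rw [add_mul, map_add, hp, hp', add_zero]

theorem mapDomainLinearMap_eq_zero_of_mem_span {ι : Type*} (s : Set ι)
    (A B : ι → σ →₀ ℕ) (hq : ∀ i ∈ s, ∀ e, q (e + A i) = q (e + B i)) {f : MvPolynomial σ R}
    (hf : f ∈ Ideal.span {g | ∃ i ∈ s, g = monomial (A i) 1 - monomial (B i) 1}) :
    mapDomainLinearMap R R q f = 0 := by
  suffices ∀ r, mapDomainLinearMap R R q (r * f) = 0 by simpa using this 1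
  induction hf using Submodule.span_induction with
  | mem g hg =>
    obtain ⟨i, hi, rfl⟩ := hg
    exact mapDomainLinearMap_mul_monomial_sub_monomial q (hq i hi)
  | zero => simp
  | add f g _ _ hf hg => intro r; rw [mul_add, map_add, hf, hg, add_zero]
  | smul a f _ hf => intro r; rw [smul_eq_mul, ← mul_assoc]; exact hf _

theorem mem_of_mapDomainLinearMap_eq_zero {I : Ideal (MvPolynomial σ R)}
    (hI : ∀ d d', q d = q d' → monomial d 1 - monomial d' 1 ∈ I)
    {f : MvPolynomial σ R} (hf : mapDomainLinearMap R R q f = 0) : f ∈ I := by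
  -- Sending each exponent `d` to a fixed representative `s d` of its `q`-fiber changes `f` by
  -- an element of `I`, and it factors through `mapDomain q`, which kills `f`.
  set s := Function.invFun q ∘ q
  have hs : ∀ d, q d = q (s d) := fun d => (Function.invFun_eq ⟨d, rfl⟩).symm
  have hsub : ∀ g : MvPolynomial σ R, g - mapDomainLinearMap R R s g ∈ I := by
    intro g
    induction g using MvPolynomial.induction_on' with
    | monomial d c =>
      rw [← single_eq_monomial, mapDomainLinearMap_single, single_eq_monomial,
        single_eq_monomial, ← mul_one c, ← smul_eq_mul, ← smul_monomial, ← smul_monomial,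
        ← smul_sub]
      exact Submodule.smul_of_tower_mem _ c (hI d (s d) (hs d))
    | add g g' hg hg' => rw [map_add, add_sub_add_comm]; exact add_mem hg hg'
  have hzero : mapDomainLinearMap R R s f = 0 := by
    rw [mapDomainLinearMap_comp, LinearMap.comp_apply, hf, map_zero]
  simpa [hzero] using hsub f

end FiberBinomials

section Toric

variable {m N : ℕ}

noncomputable def mulVecAddHom (M : Matrix (Fin m) (Fin N) ℕ) :
    (Fin N →₀ ℕ) →+ (Fin m →₀ ℕ) where
  toFun d := Finsupp.equivFunOnFinite.symm (M *ᵥ ⇑d)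
  map_zero' := by ext; simp
  map_add' d d' := by ext; simp [mulVec_add]

theorem phiM_eq_mapDomainAlgHom (M : Matrix (Fin m) (Fin N) ℕ) :
    phiM m N M = mapDomainAlgHom ℂ ℂ (mulVecAddHom M) := by
  refine MvPolynomial.algHom_ext fun j => ?_
  rw [phiM, aeval_X, mapDomainAlgHom_apply, X, ← single_eq_monomial, ← single_eq_monomial,
    mapDomain_single]
  congr 1
  ext i
  simp [mulVecAddHom, Finsupp.single_eq_pi_single]

theorem mem_ker_phiM_iff (M : Matrix (Fin m) (Fin N) ℕ) (f : MvPolynomial (Fin N) ℂ) :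
    f ∈ RingHom.ker (phiM m N M).toRingHom ↔
      mapDomainLinearMap ℂ ℂ (fun d : Fin N →₀ ℕ => M *ᵥ ⇑d) f = 0 := by
  have hcomp : mapDomain (mulVecAddHom M) f = mapDomainLinearMap ℂ ℂ
      (Finsupp.equivFunOnFinite.symm ∘ fun d : Fin N →₀ ℕ => M *ᵥ ⇑d) f := rfl
  rw [RingHom.mem_ker, AlgHom.toRingHom_eq_coe, RingHom.coe_coe, phiM_eq_mapDomainAlgHom,
    mapDomainAlgHom_apply, hcomp, mapDomainLinearMap_comp, LinearMap.comp_apply]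
  exact map_eq_zero_iff _ (mapDomain_injective (Equiv.injective _))

theorem monomial_sub_monomial_mem_ker_phiM {M : Matrix (Fin m) (Fin N) ℕ} {u u' : Fin N → ℕ}
    (h : M *ᵥ u = M *ᵥ u') :
    monomial (Finsupp.equivFunOnFinite.symm u) (1 : ℂ) -
      monomial (Finsupp.equivFunOnFinite.symm u') 1 ∈ RingHom.ker (phiM m N M).toRingHom := by
  rw [mem_ker_phiM_iff, map_sub, ← single_eq_monomial, ← single_eq_monomial,
    mapDomainLinearMap_single, mapDomainLinearMap_single]
  simp [h]

noncomputable def posExponent (v : Fin N → ℤ) : Fin N →₀ ℕ :=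
  Finsupp.equivFunOnFinite.symm fun j => (v j).toNat

theorem binom_eq (v : Fin N → ℤ) :
    binom N v = monomial (posExponent v) 1 - monomial (posExponent (-v)) 1 := rfl

noncomputable def binomialIdeal (F : Finset (Fin N → ℤ)) : Ideal (MvPolynomial (Fin N) ℂ) :=
  Ideal.span {f | ∃ v ∈ F, f = binom N v}

theorem mulVec_posExponent_eq {M : Matrix (Fin m) (Fin N) ℕ} {v : Fin N → ℤ}
    (hv : ∀ i, ∑ j, (M i j : ℤ) * v j = 0) :
    M *ᵥ ⇑(posExponent v) = M *ᵥ ⇑(posExponent (-v)) := by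
  ext i
  have key : ∑ j, (M i j : ℤ) * (v j).toNat = ∑ j, (M i j : ℤ) * (-v j).toNat := by
    rw [← sub_eq_zero, ← Finset.sum_sub_distrib, ← hv i]
    exact Finset.sum_congr rfl fun j _ => by rw [← mul_sub]; congr 1; omega
  simp only [mulVec, dotProduct, posExponent, Finsupp.coe_equivFunOnFinite_symm, Pi.neg_apply]
  exact_mod_cast key

theorem binomialIdeal_le_ker_phiM (M : Matrix (Fin m) (Fin N) ℕ) (F : Finset (Fin N → ℤ))
    (hF : ∀ v ∈ F, ∀ i, ∑ j, (M i j : ℤ) * v j = 0) :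
    binomialIdeal F ≤ RingHom.ker (phiM m N M).toRingHom := by
  intro f hf
  rw [mem_ker_phiM_iff]
  refine mapDomainLinearMap_eq_zero_of_mem_span _ (F : Set (Fin N → ℤ)) posExponent
    (fun v => posExponent (-v)) (fun v hv e => ?_) hf
  simp only [Finsupp.coe_add, mulVec_add, mulVec_posExponent_eq (hF v hv)]

section FiberGraph

def markovMove (F : Finset (Fin N → ℤ)) (w w' : Fin N → ℕ) : Prop :=
  ∃ v ∈ F, (∀ j, (w' j : ℤ) = w j + v j) ∨ (∀ j, (w j : ℤ) = w' j + v j)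

instance (F : Finset (Fin N → ℤ)) : Std.Symm (markovMove F) :=
  ⟨fun _ _ ⟨v, hv, h⟩ => ⟨v, hv, h.symm⟩⟩

variable {F : Finset (Fin N → ℤ)}

theorem markovMove_add_posExponent {v : Fin N → ℤ} (hv : v ∈ F) (e : Fin N →₀ ℕ) :
    markovMove F ⇑(e + posExponent v) ⇑(e + posExponent (-v)) := by
  refine ⟨v, hv, Or.inr fun j => ?_⟩
  simp only [Finsupp.coe_add, Pi.add_apply, posExponent, Finsupp.coe_equivFunOnFinite_symm,
    Pi.neg_apply]
  omega

theorem monomial_sub_monomial_mem_binomialIdeal_of_add {v : Fin N → ℤ} (hv : v ∈ F)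
    {w w' : Fin N → ℕ} (h : ∀ j, (w' j : ℤ) = w j + v j) :
    monomial (Finsupp.equivFunOnFinite.symm w') (1 : ℂ) -
      monomial (Finsupp.equivFunOnFinite.symm w) 1 ∈ binomialIdeal F := by
  -- `w = a + v⁻` and `w' = a + v⁺`
  set a : Fin N →₀ ℕ := Finsupp.equivFunOnFinite.symm fun j => w j - (-v j).toNat
  have hw : Finsupp.equivFunOnFinite.symm w = a + posExponent (-v) := by
    ext j
    simp only [Finsupp.coe_add, Pi.add_apply, a, posExponent, Finsupp.coe_equivFunOnFinite_symm,
      Pi.neg_apply]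
    have := h j
    omega
  have hw' : Finsupp.equivFunOnFinite.symm w' = a + posExponent v := by
    ext j
    simp only [Finsupp.coe_add, Pi.add_apply, a, posExponent, Finsupp.coe_equivFunOnFinite_symm]
    have := h j
    omega
  have hfactor : monomial (a + posExponent v) (1 : ℂ) - monomial (a + posExponent (-v)) 1 =
      monomial a 1 * binom N v := by
    rw [binom_eq, mul_sub, monomial_mul, monomial_mul, one_mul]
  rw [hw, hw', hfactor]
  exact Ideal.mul_mem_left _ _ (Ideal.subset_span ⟨v, hv, rfl⟩)

theorem monomial_sub_monomial_mem_binomialIdeal_of_markovMove {w w' : Fin N → ℕ}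
    (h : markovMove F w w') :
    monomial (Finsupp.equivFunOnFinite.symm w) (1 : ℂ) -
      monomial (Finsupp.equivFunOnFinite.symm w') 1 ∈ binomialIdeal F := by
  obtain ⟨v, hv, h | h⟩ := h
  · simpa using neg_mem (monomial_sub_monomial_mem_binomialIdeal_of_add hv h)
  · exact monomial_sub_monomial_mem_binomialIdeal_of_add hv h

theorem monomial_sub_monomial_mem_binomialIdeal_of_reflTransGen {w w' : Fin N → ℕ}
    (h : Relation.ReflTransGen (markovMove F) w w') :
    monomial (Finsupp.equivFunOnFinite.symm w) (1 : ℂ) -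
      monomial (Finsupp.equivFunOnFinite.symm w') 1 ∈ binomialIdeal F := by
  induction h with
  | refl => simp
  | tail _ hstep ih =>
    simpa using add_mem ih (monomial_sub_monomial_mem_binomialIdeal_of_markovMove hstep)

theorem reflTransGen_markovMove_of_mem_binomialIdeal {u u' : Fin N → ℕ}
    (h : monomial (Finsupp.equivFunOnFinite.symm u) (1 : ℂ) -
      monomial (Finsupp.equivFunOnFinite.symm u') 1 ∈ binomialIdeal F) :
    Relation.ReflTransGen (markovMove F) u u' := by
  -- The binomials of `F` are homogeneous for the grading by components of the fiber graph.
  have hq := mapDomainLinearMap_eq_zero_of_mem_span (fun d => Quot.mk (markovMove F) ⇑d)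
    (F : Set (Fin N → ℤ)) posExponent (fun v => posExponent (-v))
    (fun v hv e => Quot.sound (markovMove_add_posExponent hv e)) h
  rw [map_sub, ← single_eq_monomial, ← single_eq_monomial, mapDomainLinearMap_single,
    mapDomainLinearMap_single, sub_eq_zero, single_left_inj one_ne_zero] at hq
  rw [← Relation.EqvGen.eqvGen_eq_reflTransGen]
  exact Quot.eqvGen_exact hq

end FiberGraph

end Toric

theorem stmt18_general (m N : ℕ) (M : Matrix (Fin m) (Fin N) ℕ)
    (F : Finset (Fin N → ℤ))
    (hF : ∀ v ∈ F, ∀ i, ∑ j, (M i j : ℤ) * v j = 0) :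
    (Ideal.span {f | ∃ v ∈ F, f = binom N v} = RingHom.ker (phiM m N M).toRingHom) ↔
      ∀ u u' : Fin N → ℕ, (∀ i, ∑ j, M i j * u j = ∑ j, M i j * u' j) →
        Relation.ReflTransGen
          (fun w w' : Fin N → ℕ => ∃ v ∈ F,
            (∀ j, (w' j : ℤ) = w j + v j) ∨ (∀ j, (w j : ℤ) = w' j + v j))
          u u' := by
  change binomialIdeal F = _ ↔ ∀ u u', _ → Relation.ReflTransGen (markovMove F) u u'
  constructor
  · intro hspan u u' hfib
    exact reflTransGen_markovMove_of_mem_binomialIdeal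
      (hspan ▸ monomial_sub_monomial_mem_ker_phiM (funext hfib))
  · intro hconn
    refine le_antisymm (binomialIdeal_le_ker_phiM M F hF) fun f hf => ?_
    refine mem_of_mapDomainLinearMap_eq_zero _ (fun d d' hfib => ?_) ((mem_ker_phiM_iff M f).1 hf)
    simpa using
      monomial_sub_monomial_mem_binomialIdeal_of_reflTransGen (hconn d d' (congrFun hfib))

/-- Fundamental theorem of Markov bases: the binomials of a finite set
`F ⊆ ker_ℤ M` generate the toric ideal of `M` iff every fiber graph (with moves
from `F`) is connected. -/
theorem stmt18 (m N : ℕ) (M : Matrix (Fin m) (Fin N) ℕ)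
    (hcol : ∀ j, ∃ i, M i j ≠ 0)
    (F : Finset (Fin N → ℤ))
    (hF : ∀ v ∈ F, ∀ i, ∑ j, (M i j : ℤ) * v j = 0) :
    (Ideal.span {f | ∃ v ∈ F, f = binom N v} = RingHom.ker (phiM m N M).toRingHom) ↔
      ∀ u u' : Fin N → ℕ, (∀ i, ∑ j, M i j * u j = ∑ j, M i j * u' j) →
        Relation.ReflTransGen
          (fun w w' : Fin N → ℕ => ∃ v ∈ F,
            (∀ j, (w' j : ℤ) = w j + v j) ∨ (∀ j, (w j : ℤ) = w' j + v j))
          u u' :=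
  stmt18_general m N M F hF
end
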